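/- Fix m ≥ 1. For every partition λ ⊆ mδ_n there exists a nonnegative integer e, depending only on m, n and λ, such that every semistandard tableau T of shape (λ+(1^n))/λ satisfies dinv_m(T) = e + dinv′_m(T). -/
import Mathlib


open Classical

namespace HHL

/-- `d_m` of a cell `(i, j)` is `m*i + j`. -/
def dm (m : ℕ) (x : ℕ × ℕ) : ℕ := m * x.1 + x.2

/-- The reverse diagonal lexicographic order `x <_d y`. -/
def dLess (m : ℕ) (x y : ℕ × ℕ) : Prop :=
  dm m y < dm m x ∨ (dm m x = dm m y ∧ x.2 < y.2)

/-- The number of d-inversions contributed by a pair of entries with the smaller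
entry at the cell `x = (i,j)` and the larger entry at the cell `y = (i',j')`:
`max (0, m - |d_m(y) - d_m(x)|)` if `j > j'`, and
`max (0, m - |d_m(y) - d_m(x) - 1|)` if `j < j'`. -/
def contrib (m : ℕ) (x y : ℕ × ℕ) : ℕ :=
  if y.2 < x.2 then ((m : ℤ) - |(dm m y : ℤ) - (dm m x : ℤ)|).toNat
  else if x.2 < y.2 then ((m : ℤ) - |(dm m y : ℤ) - (dm m x : ℤ) - 1|).toNat
  else 0

/-- `lam` is (the row-length function of) a partition with at most `n` parts whose
Young diagram is contained in the staircase `m·δ_n = (m(n-1), m(n-2), …, m, 0)`. -/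
def IsShape (m n : ℕ) (lam : Fin n → ℕ) : Prop :=
  (∀ i j : Fin n, i ≤ j → lam j ≤ lam i) ∧
  ∀ i : Fin n, lam i ≤ m * (n - 1 - (i : ℕ))

/-- The cell `x_i = (i, λ_{i+1})` of the vertical strip `(λ+(1^n))/λ`. -/
def cell {n : ℕ} (lam : Fin n → ℕ) (i : Fin n) : ℕ × ℕ := ((i : ℕ), lam i)

/-- The cells `x_i` and `x_j` are (consecutive cells) in the same column. -/
def SameCol {n : ℕ} (lam : Fin n → ℕ) (i j : Fin n) : Prop :=
  (i : ℕ) + 1 = (j : ℕ) ∧ lam i = lam j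

/-- A semistandard tableau of the vertical strip `(λ+(1^n))/λ`: entries are
positive integers, strictly increasing up each column. -/
def IsSSYT {n : ℕ} (lam : Fin n → ℕ) (T : Fin n → ℕ) : Prop :=
  (∀ i, 1 ≤ T i) ∧ ∀ i j : Fin n, SameCol lam i j → T i < T j

/-- `T` has content `μ`: there are `μ_a` entries equal to `a` (the list `μ` is
indexed from `0`, so `μ.getD (a-1) 0` is the multiplicity of the letter `a ≥ 1`). -/
def HasContent {n : ℕ} (T : Fin n → ℕ) (μ : List ℕ) : Prop :=
  ∀ a : ℕ, Set.ncard {i : Fin n | T i = a + 1} = μ.getD a 0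

/-- An admissible ordered pair of cells `(x, y)`, `x = (i,j)`, `y = (i',j')`:
either (i) `d(y) = d(x)` and `j > j'`, or (ii) `d(y) = d(x) + 1` and `j < j'`. -/
def Admissible (x y : ℕ × ℕ) : Prop :=
  (y.1 + y.2 = x.1 + x.2 ∧ y.2 < x.2) ∨ (y.1 + y.2 = x.1 + x.2 + 1 ∧ x.2 < y.2)

/-- The number of d-inversions of a tableau of the vertical strip (`m = 1`):
admissible pairs of cells `(x,y)` with `T(x) < T(y)`. -/
noncomputable def dinv {n : ℕ} (lam : Fin n → ℕ) (T : Fin n → ℕ) : ℕ :=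
  Set.ncard {p : Fin n × Fin n |
    Admissible (cell lam p.1) (cell lam p.2) ∧ T p.1 < T p.2}

/-- The statistic `dinv_m` of a (semistandard) tableau of the vertical strip:
each pair of unequal entries contributes `contrib` with the smaller entry first;
each pair of equal entries contributes as would a pair of unequal entries with
the smaller entry at the `<_d`-smaller of the two cells. -/
noncomputable def dinvm (m : ℕ) {n : ℕ} (lam : Fin n → ℕ) (T : Fin n → ℕ) : ℕ :=
  ∑ p : Fin n × Fin n,
    if T p.1 < T p.2 then contrib m (cell lam p.1) (cell lam p.2)
    else if T p.1 = T p.2 ∧ p.1 < p.2 then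
      (if dLess m (cell lam p.1) (cell lam p.2) then
        contrib m (cell lam p.1) (cell lam p.2)
      else contrib m (cell lam p.2) (cell lam p.1))
    else 0

/-- A standard tableau of the vertical strip: a semistandard tableau which is a
bijection onto `{1, …, n}`. -/
def IsStandard {n : ℕ} (lam : Fin n → ℕ) (S : Fin n → ℕ) : Prop :=
  IsSSYT lam S ∧ Function.Injective S ∧ ∀ i, S i ≤ n

/-- The set of d-descents of a standard tableau `S`: letters `a` such that the
cells `x`, `y` with `S(x) = a`, `S(y) = a + 1` satisfy `x >_d y`. -/
def ddSet (m : ℕ) {n : ℕ} (lam : Fin n → ℕ) (S : Fin n → ℕ) : Set ℕ :=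
  {a | ∃ i j : Fin n, S i = a ∧ S j = a + 1 ∧ dLess m (cell lam j) (cell lam i)}


/-- The number of reduced d-inversions of `T`: pairs of entries
`T(x) = a < b = T(y)`, `x = (i,j)`, `y = (i',j')`, with either
`0 ≤ d_m(y) - d_m(x) ≤ m - 1` and `j > j'`, or
`1 ≤ d_m(y) - d_m(x) ≤ m` and `j < j'`. -/
noncomputable def dinvp (m : ℕ) {n : ℕ} (lam : Fin n → ℕ) (T : Fin n → ℕ) : ℕ :=
  Set.ncard {p : Fin n × Fin n | T p.1 < T p.2 ∧
    ((dm m (cell lam p.1) ≤ dm m (cell lam p.2) ∧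
      dm m (cell lam p.2) ≤ dm m (cell lam p.1) + (m - 1) ∧
      (cell lam p.2).2 < (cell lam p.1).2) ∨
    (dm m (cell lam p.1) + 1 ≤ dm m (cell lam p.2) ∧
      dm m (cell lam p.2) ≤ dm m (cell lam p.1) + m ∧
      (cell lam p.1).2 < (cell lam p.2).2))}

/-- The reduced-inversion condition on a pair of cells. -/
def redP (m : ℕ) (x y : ℕ × ℕ) : Prop :=
  (dm m x ≤ dm m y ∧ dm m y ≤ dm m x + (m - 1) ∧ y.2 < x.2) ∨
  (dm m x + 1 ≤ dm m y ∧ dm m y ≤ dm m x + m ∧ x.2 < y.2)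

lemma red0 (m : ℕ) (x y : ℕ × ℕ) (h : dLess m x y) : ¬ redP m x y := by
  unfold dLess at h
  unfold redP
  omega

lemma dLess_asymm (m : ℕ) {x y : ℕ × ℕ} (h : dLess m x y) : ¬ dLess m y x := by
  unfold dLess at *
  omega

lemma dLess_total (m : ℕ) (hm : 1 ≤ m) (x y : ℕ × ℕ) (hxy : x.1 ≠ y.1) :
    dLess m x y ∨ dLess m y x := by
  unfold dLess dm
  rcases Nat.lt_trichotomy x.1 y.1 with h | h | h
  · have h2 : m * (x.1 + 1) ≤ m * y.1 := Nat.mul_le_mul_left m h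
    rw [Nat.mul_add] at h2
    omega
  · exact absurd h hxy
  · have h2 : m * (y.1 + 1) ≤ m * x.1 := Nat.mul_le_mul_left m h
    rw [Nat.mul_add] at h2
    omega

lemma sym_core (m : ℕ) (hm : 1 ≤ m) (x y : ℕ × ℕ) (h : y.2 < x.2) :
    contrib m x y + (if redP m y x then 1 else 0)
      = contrib m y x + (if redP m x y then 1 else 0) := by
  have h1 : ¬ x.2 < y.2 := by omega
  unfold contrib redP
  rw [if_pos h, if_neg h1, if_pos h]
  rcases le_or_gt (dm m x) (dm m y) with hc | hc
  · rw [show |(dm m y : ℤ) - (dm m x : ℤ)| = (dm m y : ℤ) - (dm m x : ℤ) from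
        abs_of_nonneg (by omega),
      show |(dm m x : ℤ) - (dm m y : ℤ) - 1| = (dm m y : ℤ) + 1 - (dm m x : ℤ) from by
        rw [abs_of_nonpos (by omega)]; ring]
    split_ifs <;> omega
  · rw [show |(dm m y : ℤ) - (dm m x : ℤ)| = (dm m x : ℤ) - (dm m y : ℤ) from by
        rw [abs_of_nonpos (by omega)]; ring,
      show |(dm m x : ℤ) - (dm m y : ℤ) - 1| = (dm m x : ℤ) - (dm m y : ℤ) - 1 from
        abs_of_nonneg (by omega)]
    split_ifs <;> omega

lemma sym_full (m : ℕ) (hm : 1 ≤ m) (x y : ℕ × ℕ) :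
    contrib m x y + (if redP m y x then 1 else 0)
      = contrib m y x + (if redP m x y then 1 else 0) := by
  rcases Nat.lt_trichotomy x.2 y.2 with h | h | h
  · exact (sym_core m hm y x h).symm
  · have h1 : ¬ y.2 < x.2 := by omega
    have h2 : ¬ x.2 < y.2 := by omega
    unfold contrib redP
    rw [if_neg h1, if_neg h2, if_neg h2, if_neg h1]
    split_ifs <;> omega
  · exact sym_core m hm x y h

lemma sum_split {n : ℕ} (f : Fin n × Fin n → ℕ) (hf : ∀ a, f (a, a) = 0) :
    ∑ p : Fin n × Fin n, f p
      = ∑ p ∈ Finset.univ.filter (fun p : Fin n × Fin n => p.1 < p.2),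
          (f p + f p.swap) := by
  classical
  rw [Finset.sum_add_distrib]
  have h1 : ∑ p ∈ Finset.univ.filter (fun p : Fin n × Fin n => p.1 < p.2), f p.swap
      = ∑ p ∈ Finset.univ.filter (fun p : Fin n × Fin n => p.2 < p.1), f p := by
    refine Finset.sum_nbij' (fun p => p.swap) (fun p => p.swap) ?_ ?_ ?_ ?_ ?_ <;>
      simp [Prod.swap]
  rw [h1]
  rw [← Finset.sum_filter_add_sum_filter_not Finset.univ
    (fun p : Fin n × Fin n => p.1 < p.2) f]
  congr 1
  refine (Finset.sum_subset ?_ ?_).symm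
  · intro p hp
    simp only [Finset.mem_filter, Finset.mem_univ, true_and] at *
    omega
  · intro p hp hp2
    simp only [Finset.mem_filter, Finset.mem_univ, true_and] at *
    have : p.1 = p.2 := le_antisymm (by omega) (by omega)
    have hp' : p = (p.1, p.1) := by
      rw [Prod.ext_iff]; exact ⟨rfl, this.symm⟩
    rw [hp']
    exact hf p.1

/-- There is a constant `e`, depending only on `m`, `n` and `λ`, with
`dinv_m(T) = e + dinv'_m(T)` for every semistandard tableau `T` of shape
`(λ+(1^n))/λ`. -/
theorem statement18 (m n : ℕ) (hm : 1 ≤ m) (hn : 1 ≤ n)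
    (lam : Fin n → ℕ) (hlam : IsShape m n lam) :
    ∃ e : ℕ, ∀ T : Fin n → ℕ, IsSSYT lam T →
      dinvm m lam T = e + dinvp m lam T := by
  classical
  refine ⟨∑ p ∈ Finset.univ.filter (fun p : Fin n × Fin n => p.1 < p.2),
      (if dLess m (cell lam p.1) (cell lam p.2)
        then contrib m (cell lam p.1) (cell lam p.2)
        else contrib m (cell lam p.2) (cell lam p.1)), ?_⟩
  intro T _
  set F : Fin n × Fin n → ℕ := fun p =>
    if T p.1 < T p.2 then contrib m (cell lam p.1) (cell lam p.2)
    else if T p.1 = T p.2 ∧ p.1 < p.2 then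
      (if dLess m (cell lam p.1) (cell lam p.2) then
        contrib m (cell lam p.1) (cell lam p.2)
      else contrib m (cell lam p.2) (cell lam p.1))
    else 0 with hF
  set R : Fin n × Fin n → ℕ := fun p =>
    if T p.1 < T p.2 ∧ redP m (cell lam p.1) (cell lam p.2) then 1 else 0 with hR
  have hFd : ∀ a, F (a, a) = 0 := by
    intro a; simp [hF]
  have hRd : ∀ a, R (a, a) = 0 := by
    intro a; simp [hR]
  have hdm : dinvm m lam T = ∑ p : Fin n × Fin n, F p := by
    unfold dinvm
    refine Finset.sum_congr rfl fun p _ => ?_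
    rw [hF]
  have hdp : dinvp m lam T = ∑ p : Fin n × Fin n, R p := by
    unfold dinvp
    rw [Set.ncard_eq_toFinset_card', Set.toFinset_setOf, Finset.card_filter]
    refine Finset.sum_congr rfl fun p _ => ?_
    rw [hR]
    exact if_congr (and_congr Iff.rfl (by unfold redP; exact Iff.rfl)) rfl rfl
  rw [hdm, hdp, sum_split F hFd, sum_split R hRd, ← Finset.sum_add_distrib]
  refine Finset.sum_congr rfl fun p hp => ?_
  rw [Finset.mem_filter] at hp
  have hplt : p.1 < p.2 := hp.2
  have hnlt : ¬ p.2 < p.1 := by omega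
  have hne : (cell lam p.1).1 ≠ (cell lam p.2).1 := by
    simp only [cell]
    exact fun h => absurd (Fin.ext h :) (Fin.ne_of_lt hplt)
  have hsw1 : p.swap.1 = p.2 := rfl
  have hsw2 : p.swap.2 = p.1 := rfl
  rw [hF, hR]
  simp only [hsw1, hsw2]
  set x := cell lam p.1 with hx
  set y := cell lam p.2 with hy
  rcases Nat.lt_trichotomy (T p.1) (T p.2) with ht | ht | ht
  · have h2 : ¬ T p.2 < T p.1 := by omega
    have e1 : (if T p.2 < T p.1 then contrib m y x
        else if T p.2 = T p.1 ∧ p.2 < p.1 then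
          (if dLess m y x then contrib m y x else contrib m x y)
        else 0) = 0 := by
      rw [if_neg h2, if_neg (fun h => absurd h.2 hnlt)]
    have e2 : (if T p.2 < T p.1 ∧ redP m y x then (1:ℕ) else 0) = 0 :=
      if_neg (fun h => h2 h.1)
    have e3 : (if T p.1 < T p.2 ∧ redP m x y then (1:ℕ) else 0)
        = (if redP m x y then (1:ℕ) else 0) :=
      if_congr (and_iff_right ht) rfl rfl
    rw [if_pos ht, e1, e2, e3]
    rcases dLess_total m hm _ _ hne with hd | hd
    · rw [if_pos hd, if_neg (red0 m _ _ hd)]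
    · have hnd : ¬ dLess m x y := fun h => dLess_asymm m h hd
      rw [if_neg hnd]
      have hs := sym_full m hm x y
      rw [if_neg (red0 m _ _ hd)] at hs
      omega
  · have h1 : ¬ T p.1 < T p.2 := by omega
    have h2 : ¬ T p.2 < T p.1 := by omega
    have e1 : (if T p.2 < T p.1 then contrib m y x
        else if T p.2 = T p.1 ∧ p.2 < p.1 then
          (if dLess m y x then contrib m y x else contrib m x y)
        else 0) = 0 := by
      rw [if_neg h2, if_neg (fun h => absurd h.2 hnlt)]
    have e2 : (if T p.2 < T p.1 ∧ redP m y x then (1:ℕ) else 0) = 0 :=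
      if_neg (fun h => h2 h.1)
    have e3 : (if T p.1 < T p.2 ∧ redP m x y then (1:ℕ) else 0) = 0 :=
      if_neg (fun h => h1 h.1)
    rw [if_neg h1, if_pos (⟨ht, hplt⟩ : T p.1 = T p.2 ∧ p.1 < p.2), e1, e2, e3]
  · have h1 : ¬ T p.1 < T p.2 := by omega
    have e0 : (if T p.1 < T p.2 then contrib m x y
        else if T p.1 = T p.2 ∧ p.1 < p.2 then
          (if dLess m x y then contrib m x y else contrib m y x)
        else 0) = 0 := by
      rw [if_neg h1, if_neg (fun h => absurd h.1 (by omega : ¬ T p.1 = T p.2))]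
    have e1 : (if T p.2 < T p.1 then contrib m y x
        else if T p.2 = T p.1 ∧ p.2 < p.1 then
          (if dLess m y x then contrib m y x else contrib m x y)
        else 0) = contrib m y x := if_pos ht
    have e2 : (if T p.2 < T p.1 ∧ redP m y x then (1:ℕ) else 0)
        = (if redP m y x then (1:ℕ) else 0) :=
      if_congr (and_iff_right ht) rfl rfl
    have e3 : (if T p.1 < T p.2 ∧ redP m x y then (1:ℕ) else 0) = 0 :=
      if_neg (fun h => h1 h.1)
    rw [e0, e1, e2, e3]
    rcases dLess_total m hm _ _ hne with hd | hd
    · rw [if_pos hd]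
      have hs := sym_full m hm x y
      rw [if_neg (red0 m _ _ hd)] at hs
      omega
    · have hnd : ¬ dLess m x y := fun h => dLess_asymm m h hd
      rw [if_neg hnd, if_neg (red0 m _ _ hd)]
      omega

end HHL
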